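/- Let K : ℝ → ℝ be continuous and let u be a C² solution of u'' + K u = 0, not identically zero, having at least 2N distinct zeros t₁ < t₂ < ⋯ < t_{2N}. Then there exist C¹ functions f₁, …, f_N : ℝ → ℝ, each with compact support, with pairwise disjoint supports, and with ∫ (fᵢ')² < ∫ K fᵢ² for each i. (Hence the Morse index of the geodesic is at least N.) -/

import Mathlib

/-!
Pair the zeros as `(t₁, t₂), (t₃, t₄), …` and let `a < b` be one pair. Since `u ≢ 0`, uniqueness
for the Jacobi equation forces `u'(b) ≠ 0`. The broken Jacobi field `u · 1_[a,b]` has index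
form `0`; more precisely `Q(u ψ) = ∫ u² ψ'²` for every compactly supported `ψ`, so rounding its
corners with a plateau of ramp width `ε` costs only `O(ε)`, because `u = O(ε)` on the ramps.
Adding `η χ` for a bump `χ` at `b` changes `Q` by `2 η u'(b) + η² Q(χ) + O(ε)` (Green's formula
for `u` and `χ` on `[a, b]`), which is negative for a small `η` of sign opposite to `u'(b)`.
Keeping every support inside `[a, b + δ]` for a small `δ` makes the `N` variations disjointly
supported.
-/

open MeasureTheory Set Filter Topology Real

noncomputable def indexForm (K f : ℝ → ℝ) : ℝ := (∫ t, deriv f t ^ 2) - ∫ t, K t * f t ^ 2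

noncomputable def indexBilinForm (K f g : ℝ → ℝ) : ℝ :=
  ∫ t, (deriv f t * deriv g t - K t * f t * g t)

theorem HasCompactSupport.integral_deriv_eq_zero {G : ℝ → ℝ} (hG : ContDiff ℝ 1 G)
    (hGc : HasCompactSupport G) : ∫ t, deriv G t = 0 :=
  integral_eq_zero_of_hasDerivAt_of_integrable
    (fun t => (hG.differentiable one_ne_zero t).hasDerivAt)
    ((hG.continuous_deriv le_rfl).integrable_of_hasCompactSupport hGc.deriv)
    (hG.continuous.integrable_of_hasCompactSupport hGc)

theorem abs_integral_le_of_forall_notMem_eq_zero {F : ℝ → ℝ} {S : Set ℝ} {C : ℝ}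
    (hS : volume S < ⊤) (hF : ∀ t ∉ S, F t = 0) (hC : ∀ t ∈ S, |F t| ≤ C) :
    |∫ t, F t| ≤ C * volume.real S := by
  rw [← setIntegral_eq_integral_of_forall_compl_eq_zero hF]
  simpa only [Real.norm_eq_abs] using norm_setIntegral_le_of_norm_le_const (f := F) hS
    fun t ht => (Real.norm_eq_abs _).trans_le (hC t ht)

theorem integral_eq_intervalIntegral_of_forall_notMem_eq_zero {F : ℝ → ℝ} {a b : ℝ}
    (hab : a ≤ b) (hF : ∀ t ∉ Ioc a b, F t = 0) : ∫ t, F t = ∫ t in a..b, F t := by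
  rw [intervalIntegral.integral_of_le hab, setIntegral_eq_integral_of_forall_compl_eq_zero hF]

section IndexForm

variable {K f g : ℝ → ℝ}

theorem integrable_indexBilinForm_integrand (hK : Continuous K) (hf : ContDiff ℝ 1 f)
    (hfc : HasCompactSupport f) (hg : ContDiff ℝ 1 g) :
    Integrable fun t => deriv f t * deriv g t - K t * f t * g t := by
  have := hf.continuous_deriv le_rfl
  have := hg.continuous_deriv le_rfl
  have := hf.continuous
  have := hg.continuous
  refine Continuous.integrable_of_hasCompactSupport (by fun_prop) ?_
  exact hfc.deriv.mul_right.sub (hfc.mul_left.mul_right)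

theorem indexForm_eq_indexBilinForm (hK : Continuous K) (hf : ContDiff ℝ 1 f)
    (hfc : HasCompactSupport f) : indexForm K f = indexBilinForm K f f := by
  have := hf.continuous_deriv le_rfl
  have := hf.continuous
  simp only [indexForm, indexBilinForm, sq, ← mul_assoc]
  rw [integral_sub]
  · exact Continuous.integrable_of_hasCompactSupport (by fun_prop) hfc.deriv.mul_left
  · exact Continuous.integrable_of_hasCompactSupport (by fun_prop) hfc.mul_left.mul_right

theorem indexBilinForm_add_smul (hK : Continuous K) (hf : ContDiff ℝ 1 f)
    (hfc : HasCompactSupport f) (hg : ContDiff ℝ 1 g) (hgc : HasCompactSupport g) (η : ℝ) :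
    indexBilinForm K (fun t => f t + η * g t) (fun t => f t + η * g t) =
      indexBilinForm K f f + 2 * η * indexBilinForm K f g + η ^ 2 * indexBilinForm K g g := by
  have hderiv : deriv (fun t => f t + η * g t) = fun t => deriv f t + η * deriv g t :=
    funext fun t => ((hf.differentiable one_ne_zero t).hasDerivAt.add
      ((hg.differentiable one_ne_zero t).hasDerivAt.const_mul η)).deriv
  have hff := integrable_indexBilinForm_integrand hK hf hfc hf
  have hfg := integrable_indexBilinForm_integrand hK hf hfc hg
  have hgg := integrable_indexBilinForm_integrand hK hg hgc hg
  simp only [indexBilinForm, hderiv]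
  calc _ = ∫ t, ((deriv f t * deriv f t - K t * f t * f t)
          + 2 * η * (deriv f t * deriv g t - K t * f t * g t))
          + η ^ 2 * (deriv g t * deriv g t - K t * g t * g t) := by
        congr 1 with t
        ring
    _ = _ := by
      rw [integral_add, integral_add, integral_const_mul, integral_const_mul]
      exacts [hff, hfg.const_mul _, hff.add (hfg.const_mul _), hgg.const_mul _]

end IndexForm

theorem indexBilinForm_eq_neg_integral {K f χ : ℝ → ℝ} (hK : Continuous K)
    (hf : ContDiff ℝ 1 f) (hfc : HasCompactSupport f) (hχ : ContDiff ℝ 2 χ) :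
    indexBilinForm K f χ = -∫ t, f t * (deriv (deriv χ) t + K t * χ t) := by
  have hχ' : ContDiff ℝ 1 (deriv χ) := hχ.deriv' (n := 1)
  have := hχ'.continuous_deriv le_rfl
  have := hχ.continuous
  have := hf.continuous
  have hG : ContDiff ℝ 1 fun t => f t * deriv χ t := hf.mul hχ'
  have hGd (t : ℝ) : deriv (fun t => f t * deriv χ t) t =
      deriv f t * deriv χ t + f t * deriv (deriv χ) t :=
    ((hf.differentiable one_ne_zero t).hasDerivAt.mul
      (hχ'.differentiable one_ne_zero t).hasDerivAt).deriv
  have hR : Integrable fun t => f t * (deriv (deriv χ) t + K t * χ t) :=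
    Continuous.integrable_of_hasCompactSupport (by fun_prop) hfc.mul_right
  calc indexBilinForm K f χ
      = ∫ t, (deriv (fun t => f t * deriv χ t) t - f t * (deriv (deriv χ) t + K t * χ t)) := by
        rw [indexBilinForm]
        congr 1 with t
        rw [hGd]
        ring
    _ = _ := by
      rw [integral_sub ((hG.continuous_deriv le_rfl).integrable_of_hasCompactSupport
        hfc.mul_right.deriv) hR, hfc.mul_right.integral_deriv_eq_zero hG, zero_sub]

theorem indexBilinForm_jacobi_mul_self {K u ψ : ℝ → ℝ} (hu : ContDiff ℝ 2 u)
    (hJ : ∀ t, deriv (deriv u) t + K t * u t = 0) (hψ : ContDiff ℝ 1 ψ)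
    (hψc : HasCompactSupport ψ) :
    indexBilinForm K (fun t => u t * ψ t) (fun t => u t * ψ t) = ∫ t, (u t * deriv ψ t) ^ 2 := by
  have hu' : ContDiff ℝ 1 (deriv u) := hu.deriv' (n := 1)
  have hu1 : ContDiff ℝ 1 u := hu.of_le (by norm_num)
  have := hψ.continuous_deriv le_rfl
  have := hu1.continuous
  have hd := fun t => (hu1.differentiable one_ne_zero t).hasDerivAt
  have hd' := fun t => (hu'.differentiable one_ne_zero t).hasDerivAt
  have hψd := fun t => (hψ.differentiable one_ne_zero t).hasDerivAt
  have hG : ContDiff ℝ 1 fun t => u t * deriv u t * (ψ t * ψ t) := (hu1.mul hu').mul (hψ.mul hψ)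
  have hGc : HasCompactSupport fun t => u t * deriv u t * (ψ t * ψ t) := hψc.mul_left.mul_left
  have hR : Integrable fun t => (u t * deriv ψ t) ^ 2 :=
    Continuous.integrable_of_hasCompactSupport (by fun_prop)
      ((hψc.deriv.mul_left (f := u)).comp_left (g := fun x => x ^ 2) (zero_pow two_ne_zero))
  calc indexBilinForm K (fun t => u t * ψ t) (fun t => u t * ψ t)
      = ∫ t, (deriv (fun t => u t * deriv u t * (ψ t * ψ t)) t + (u t * deriv ψ t) ^ 2) := by
        rw [indexBilinForm]
        congr 1 with t
        have e1 : deriv (fun t => u t * ψ t) t = deriv u t * ψ t + u t * deriv ψ t :=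
          ((hd t).mul (hψd t)).deriv
        have e2 : deriv (fun t => u t * deriv u t * (ψ t * ψ t)) t =
            (deriv u t * deriv u t + u t * deriv (deriv u) t) * (ψ t * ψ t) +
              u t * deriv u t * (deriv ψ t * ψ t + ψ t * deriv ψ t) :=
          (((hd t).mul (hd' t)).mul ((hψd t).mul (hψd t))).deriv
        rw [e1, e2]
        linear_combination (-(ψ t * ψ t) * u t) * hJ t
    _ = _ := by
      rw [integral_add ((hG.continuous_deriv le_rfl).integrable_of_hasCompactSupport hGc.deriv) hR,
        hGc.integral_deriv_eq_zero hG, zero_add]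

theorem intervalIntegral_jacobi_mul_eq_wronskian {K u χ : ℝ → ℝ} (hK : Continuous K)
    (hu : ContDiff ℝ 2 u) (hJ : ∀ t, deriv (deriv u) t + K t * u t = 0) (hχ : ContDiff ℝ 2 χ)
    (x y : ℝ) :
    ∫ t in x..y, u t * (deriv (deriv χ) t + K t * χ t) =
      (u y * deriv χ y - deriv u y * χ y) - (u x * deriv χ x - deriv u x * χ x) := by
  have hu' : ContDiff ℝ 1 (deriv u) := hu.deriv' (n := 1)
  have hχ' : ContDiff ℝ 1 (deriv χ) := hχ.deriv' (n := 1)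
  have := hχ'.continuous_deriv le_rfl
  have := hχ.continuous
  have := hu.continuous
  refine intervalIntegral.integral_eq_sub_of_hasDerivAt
    (f := fun t => u t * deriv χ t - deriv u t * χ t) (fun t _ => ?_)
    ((by fun_prop : Continuous fun t => u t * (deriv (deriv χ) t + K t * χ t)).intervalIntegrable
      _ _)
  have hd := ((hu.differentiable two_ne_zero t).hasDerivAt.mul
    (hχ'.differentiable one_ne_zero t).hasDerivAt).sub
    ((hu'.differentiable one_ne_zero t).hasDerivAt.mul
      (hχ.differentiable two_ne_zero t).hasDerivAt)
  refine hd.congr_deriv ?_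
  linear_combination (-χ t) * hJ t

theorem eq_zero_of_jacobi_of_deriv_eq_zero {K u : ℝ → ℝ} (hK : Continuous K)
    (hu : ContDiff ℝ 2 u) (hJ : ∀ t, deriv (deriv u) t + K t * u t = 0) {b : ℝ}
    (hb : u b = 0) (hb' : deriv u b = 0) : u = 0 := by
  have hu' : ContDiff ℝ 1 (deriv u) := hu.deriv' (n := 1)
  funext t
  set R := |t - b| + 1
  obtain ⟨M, hM⟩ := (isCompact_Icc (a := b - R) (b := b + R)).exists_bound_of_continuousOn
    hK.continuousOn
  have hLip (s : ℝ) (hs : s ∈ Icc (b - R) (b + R)) :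
      LipschitzWith (max 1 M.toNNReal) fun x : ℝ × ℝ => (x.2, -K s * x.1) := by
    refine (LipschitzWith.prod_snd.prodMk
      ((lipschitzWith_smul (-K s)).comp LipschitzWith.prod_fst)).weaken ?_
    rw [mul_one, nnnorm_neg]
    exact max_le_max le_rfl (NNReal.le_toNNReal_of_coe_le (hM s hs))
  have hR : 0 < R := by positivity
  have hsol := ODE_solution_unique_of_mem_Icc (s := fun _ => univ)
    (v := fun s (x : ℝ × ℝ) => (x.2, -K s * x.1)) (f := fun s => (u s, deriv u s))
    (g := fun _ => 0) (t₀ := b) (fun s hs => (hLip s (Ioo_subset_Icc_self hs)).lipschitzOnWith)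
    ⟨by linarith, by linarith⟩ (hu.continuous.prodMk hu'.continuous).continuousOn
    (fun s _ => ((hu.differentiable two_ne_zero s).hasDerivAt.prodMk
      (hu'.differentiable one_ne_zero s).hasDerivAt).congr_deriv
        (by rw [eq_neg_of_add_eq_zero_left (hJ s), neg_mul]))
    (fun _ _ => trivial) continuousOn_const
    (fun s _ => by convert hasDerivAt_const s (0 : ℝ × ℝ) using 1; simp)
    (fun _ _ => trivial) (by simp [hb, hb'])
  have ht : t ∈ Icc (b - R) (b + R) := by
    constructor <;> linarith [le_abs_self (t - b), neg_abs_le (t - b)]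
  exact congrArg Prod.fst (hsol ht)

theorem deriv_smoothTransition_eq_zero {x : ℝ} (hx : x ∉ Icc 0 1) :
    deriv smoothTransition x = 0 := by
  rcases not_and_or.mp hx with hx | hx <;> rw [not_le] at hx
  · have h : smoothTransition =ᶠ[𝓝 x] fun _ => 0 :=
      (eventually_lt_nhds hx).mono fun y hy => smoothTransition.zero_of_nonpos hy.le
    rw [h.deriv_eq, deriv_const]
  · have h : smoothTransition =ᶠ[𝓝 x] fun _ => 1 :=
      (eventually_gt_nhds hx).mono fun y hy => smoothTransition.one_of_one_le hy.le
    rw [h.deriv_eq, deriv_const]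

theorem exists_abs_deriv_smoothTransition_le : ∃ D, ∀ x, |deriv smoothTransition x| ≤ D :=
  ((smoothTransition.contDiff (n := 1)).continuous_deriv le_rfl).bounded_above_of_compact_support
    (HasCompactSupport.intro isCompact_Icc fun _ hx => deriv_smoothTransition_eq_zero hx)

noncomputable def plateau (a b ε t : ℝ) : ℝ :=
  smoothTransition ((t - a) / ε) * smoothTransition ((b - t) / ε)

section Plateau

variable {a b ε t : ℝ}

theorem contDiff_plateau {n : ℕ∞} : ContDiff ℝ n (plateau a b ε) :=
  (smoothTransition.contDiff.comp ((contDiff_id.sub contDiff_const).div_const ε)).mul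
    (smoothTransition.contDiff.comp ((contDiff_const.sub contDiff_id).div_const ε))

theorem plateau_eq_zero_of_le (hε : 0 ≤ ε) (ht : t ≤ a) : plateau a b ε t = 0 := by
  rw [plateau, smoothTransition.zero_of_nonpos (div_nonpos_of_nonpos_of_nonneg (by linarith) hε),
    zero_mul]

theorem plateau_eq_zero_of_ge (hε : 0 ≤ ε) (ht : b ≤ t) : plateau a b ε t = 0 := by
  rw [plateau, smoothTransition.zero_of_nonpos (x := (b - t) / ε)
    (div_nonpos_of_nonpos_of_nonneg (by linarith) hε), mul_zero]

theorem plateau_eq_one (hε : 0 < ε) (ha : a + ε ≤ t) (hb : t ≤ b - ε) : plateau a b ε t = 1 := by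
  rw [plateau, smoothTransition.one_of_one_le, smoothTransition.one_of_one_le, mul_one] <;>
    rw [le_div_iff₀ hε] <;> linarith

theorem abs_plateau_le_one : |plateau a b ε t| ≤ 1 := by
  rw [plateau, abs_of_nonneg (mul_nonneg (smoothTransition.nonneg _) (smoothTransition.nonneg _))]
  exact mul_le_one₀ (smoothTransition.le_one _) (smoothTransition.nonneg _)
    (smoothTransition.le_one _)

theorem hasDerivAt_plateau (a b ε t : ℝ) :
    HasDerivAt (plateau a b ε)
      (deriv smoothTransition ((t - a) / ε) / ε * smoothTransition ((b - t) / ε) -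
        smoothTransition ((t - a) / ε) * (deriv smoothTransition ((b - t) / ε) / ε)) t := by
  have hg (x : ℝ) : HasDerivAt smoothTransition (deriv smoothTransition x) x :=
    (smoothTransition.contDiff (n := 1)).differentiable one_ne_zero x |>.hasDerivAt
  have hl := (hg ((t - a) / ε)).comp t (((hasDerivAt_id' t).sub_const a).div_const ε)
  have hr := (hg ((b - t) / ε)).comp t (((hasDerivAt_id' t).const_sub b).div_const ε)
  exact (hl.mul hr).congr_deriv (by simp only [Function.comp_apply]; ring)

theorem deriv_plateau_eq_zero (hε : 0 < ε) (ht : t ∉ Icc a (a + ε) ∪ Icc (b - ε) b) :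
    deriv (plateau a b ε) t = 0 := by
  simp only [mem_union, mem_Icc, not_or, not_and_or, not_le] at ht
  rw [(hasDerivAt_plateau a b ε t).deriv]
  rcases ht with ⟨ht | ht, hbt⟩
  · have hx : (t - a) / ε < 0 := div_neg_of_neg_of_pos (by linarith) hε
    rw [deriv_smoothTransition_eq_zero fun h => hx.not_ge h.1,
      smoothTransition.zero_of_nonpos hx.le]
    ring
  · have hx : 1 < (t - a) / ε := (one_lt_div hε).mpr (by linarith)
    have hy : (b - t) / ε ∉ Icc 0 1 := by
      rintro ⟨h0, h1⟩
      rw [div_nonneg_iff, div_le_one hε] at *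
      rcases hbt with hbt | hbt
      · linarith
      · rcases h0 with h0 | h0 <;> linarith
    rw [deriv_smoothTransition_eq_zero fun h => hx.not_ge h.2, deriv_smoothTransition_eq_zero hy]
    ring

theorem exists_abs_deriv_plateau_le :
    ∃ D, ∀ a b ε t, 0 < ε → |deriv (plateau a b ε) t| ≤ D / ε := by
  obtain ⟨D, hD⟩ := exists_abs_deriv_smoothTransition_le
  have hg (x : ℝ) : |smoothTransition x| ≤ 1 :=
    (abs_of_nonneg (smoothTransition.nonneg x)).trans_le (smoothTransition.le_one x)
  have hD0 : 0 ≤ D := (abs_nonneg _).trans (hD 0)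
  refine ⟨2 * D, fun a b ε t hε => ?_⟩
  rw [(hasDerivAt_plateau a b ε t).deriv]
  set x := (t - a) / ε
  set y := (b - t) / ε
  calc _ ≤ |deriv smoothTransition x| / ε * |smoothTransition y| +
        |smoothTransition x| * (|deriv smoothTransition y| / ε) := by
        simpa only [abs_mul, abs_div, abs_of_pos hε] using
          abs_sub (deriv smoothTransition x / ε * smoothTransition y)
            (smoothTransition x * (deriv smoothTransition y / ε))
    _ ≤ D / ε * 1 + 1 * (D / ε) := by gcongr <;> apply_assumption
    _ = 2 * D / ε := by ring

end Plateau

theorem integral_mul_deriv_plateau_sq_le {u : ℝ → ℝ} {a b ε L D : ℝ} (hε : 0 < ε)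
    (hu : ∀ t ∈ Icc a (a + ε) ∪ Icc (b - ε) b, |u t| ≤ L * ε)
    (hD : ∀ t, |deriv (plateau a b ε) t| ≤ D / ε) :
    ∫ t, (u t * deriv (plateau a b ε) t) ^ 2 ≤ 2 * (L * D) ^ 2 * ε := by
  have hS : volume (Icc a (a + ε) ∪ Icc (b - ε) b) < ⊤ :=
    (isCompact_Icc.union isCompact_Icc).measure_lt_top
  have hSε : volume.real (Icc a (a + ε) ∪ Icc (b - ε) b) ≤ 2 * ε := by
    refine (measureReal_union_le _ _).trans ?_
    rw [Real.volume_real_Icc_of_le (by linarith), Real.volume_real_Icc_of_le (by linarith)]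
    linarith
  have hbound := abs_integral_le_of_forall_notMem_eq_zero
    (F := fun t => (u t * deriv (plateau a b ε) t) ^ 2) hS
    (fun t ht => by rw [deriv_plateau_eq_zero hε ht, mul_zero, sq, mul_zero])
    (C := (L * D) ^ 2) fun t ht => by
      have hLD : |u t| * |deriv (plateau a b ε) t| ≤ L * ε * (D / ε) :=
        mul_le_mul (hu t ht) (hD t) (abs_nonneg _) ((abs_nonneg _).trans (hu t ht))
      rw [show L * ε * (D / ε) = L * D by field_simp] at hLD
      rw [abs_pow, abs_mul]
      exact pow_le_pow_left₀ (by positivity) hLD 2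
  calc _ ≤ |∫ t, (u t * deriv (plateau a b ε) t) ^ 2| := le_abs_self _
    _ ≤ (L * D) ^ 2 * (2 * ε) := hbound.trans (by gcongr)
    _ = 2 * (L * D) ^ 2 * ε := by ring

theorem abs_integral_jacobi_mul_plateau_add_le {K u χ : ℝ → ℝ} (hK : Continuous K)
    (hu : ContDiff ℝ 2 u) (hJ : ∀ t, deriv (deriv u) t + K t * u t = 0) (hχ : ContDiff ℝ 2 χ)
    {a b ε M : ℝ} (hab : a < b) (hε : 0 < ε) (hb : u b = 0) (hχs : tsupport χ ⊆ Ici (a + ε))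
    (hM : ∀ t ∈ Icc b (b + ε), |u t * (deriv (deriv χ) t + K t * χ t)| ≤ M) :
    |(∫ t, u t * plateau a (b + ε) ε t * (deriv (deriv χ) t + K t * χ t)) + deriv u b * χ b|
      ≤ M * ε := by
  have hχ0 {t : ℝ} (ht : t < a + ε) : χ t = 0 ∧ deriv χ t = 0 ∧ deriv (deriv χ) t = 0 := by
    have hnot : t ∉ tsupport χ := fun h => (hχs h).not_gt ht
    exact ⟨image_eq_zero_of_notMem_tsupport hnot,
      image_eq_zero_of_notMem_tsupport fun h => hnot (tsupport_deriv_subset h),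
      image_eq_zero_of_notMem_tsupport fun h => hnot (tsupport_deriv_subset
        (tsupport_deriv_subset h))⟩
  have hcont : Continuous fun t => u t * plateau a (b + ε) ε t *
      (deriv (deriv χ) t + K t * χ t) := by
    have := (hχ.deriv' (n := 1)).continuous_deriv le_rfl
    have := hχ.continuous
    have := hu.continuous
    have : Continuous (plateau a (b + ε) ε) := contDiff_plateau (n := 0).continuous
    fun_prop
  have hleft : ∫ t in a..b, u t * plateau a (b + ε) ε t * (deriv (deriv χ) t + K t * χ t) =
      -(deriv u b * χ b) := by
    rw [intervalIntegral.integral_congr (g := fun t => u t * (deriv (deriv χ) t + K t * χ t)),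
      intervalIntegral_jacobi_mul_eq_wronskian hK hu hJ hχ, hb, (hχ0 (t := a) (by linarith)).1,
      (hχ0 (t := a) (by linarith)).2.1]
    · ring
    intro t ht
    rw [uIcc_of_le hab.le] at ht
    rcases lt_or_ge t (a + ε) with h | h
    · simp only [(hχ0 h).1, (hχ0 h).2.2]
      ring
    · simp only [plateau_eq_one (b := b + ε) hε h (by linarith [ht.2]), mul_one]
  rw [integral_eq_intervalIntegral_of_forall_notMem_eq_zero (a := a) (b := b + ε) (by linarith),
    ← intervalIntegral.integral_add_adjacent_intervals (b := b) (hcont.intervalIntegrable _ _)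
      (hcont.intervalIntegrable _ _), hleft, neg_add_cancel_comm]
  · have hI := intervalIntegral.norm_integral_le_of_norm_le_const (a := b) (b := b + ε) (C := M)
      (f := fun t => u t * plateau a (b + ε) ε t * (deriv (deriv χ) t + K t * χ t))
      fun t ht => by
        rw [uIoc_of_le (by linarith)] at ht
        rw [Real.norm_eq_abs, mul_right_comm, abs_mul]
        exact (mul_le_of_le_one_right (abs_nonneg _) abs_plateau_le_one).trans
          (hM t (Ioc_subset_Icc_self ht))
    rwa [Real.norm_eq_abs, add_sub_cancel_left, abs_of_pos hε] at hI
  · intro t ht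
    rcases not_and_or.mp ht with ht | ht
    · rw [plateau_eq_zero_of_le hε.le (not_lt.mp ht), mul_zero, zero_mul]
    · rw [plateau_eq_zero_of_ge hε.le (not_le.mp ht).le, mul_zero, zero_mul]

theorem exists_two_mul_mul_add_sq_mul_neg {β : ℝ} (hβ : β ≠ 0) (Q : ℝ) :
    ∃ η, 2 * η * β + η ^ 2 * Q < 0 := by
  have h1 : 0 < 1 + |Q| := by positivity
  have hQ : Q / (1 + |Q|) < 1 := (div_lt_one h1).mpr (by linarith [le_abs_self Q])
  have hβ2 : 0 < β ^ 2 / (1 + |Q|) := by positivity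
  refine ⟨-β / (1 + |Q|), ?_⟩
  have e : 2 * (-β / (1 + |Q|)) * β + (-β / (1 + |Q|)) ^ 2 * Q =
      -(β ^ 2 / (1 + |Q|)) * (2 - Q / (1 + |Q|)) := by
    field_simp
    ring
  rw [e]
  nlinarith

theorem indexForm_jacobi_mul_plateau_add_le {K u χ : ℝ → ℝ} (hK : Continuous K)
    (hu : ContDiff ℝ 2 u) (hJ : ∀ t, deriv (deriv u) t + K t * u t = 0) (hχ : ContDiff ℝ 2 χ)
    (hχc : HasCompactSupport χ) {a b ε L D M η : ℝ} (hab : a < b) (hε : 0 < ε)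
    (ha : u a = 0) (hb : u b = 0) (hχs : tsupport χ ⊆ Ici (a + ε))
    (hL : ∀ t ∈ Icc a (b + ε), |deriv u t| ≤ L)
    (hD : ∀ t, |deriv (plateau a (b + ε) ε) t| ≤ D / ε)
    (hM : ∀ t ∈ Icc b (b + ε), |u t * (deriv (deriv χ) t + K t * χ t)| ≤ M) :
    indexForm K (fun t => u t * plateau a (b + ε) ε t + η * χ t) ≤
      2 * η * deriv u b * χ b + η ^ 2 * indexBilinForm K χ χ +
        (2 * (L * D) ^ 2 + 2 * |η| * M) * ε := by
  have hφ : ContDiff ℝ 1 (plateau a (b + ε) ε) := contDiff_plateau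
  have hφc : HasCompactSupport (plateau a (b + ε) ε) :=
    HasCompactSupport.intro (isCompact_Icc (a := a) (b := b + ε)) fun t ht => by
      rcases not_and_or.mp ht with ht | ht
      · exact plateau_eq_zero_of_le hε.le (not_le.mp ht).le
      · exact plateau_eq_zero_of_ge hε.le (not_le.mp ht).le
  have huφ : ContDiff ℝ 1 fun t => u t * plateau a (b + ε) ε t := (hu.of_le one_le_two).mul hφ
  have huφc : HasCompactSupport fun t => u t * plateau a (b + ε) ε t := hφc.mul_left
  have hχ1 : ContDiff ℝ 1 χ := hχ.of_le one_le_two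
  have hramp : ∀ t ∈ Icc a (a + ε) ∪ Icc (b + ε - ε) (b + ε), |u t| ≤ L * ε := by
    have hlip {x t : ℝ} (hx : x ∈ Icc a (b + ε)) (ht : t ∈ Icc a (b + ε)) (hux : u x = 0)
        (htx : |t - x| ≤ ε) : |u t| ≤ L * ε := by
      have := (convex_Icc a (b + ε)).norm_image_sub_le_of_norm_deriv_le
        (fun s _ => (hu.differentiable two_ne_zero s)) hL hx ht
      rw [hux, sub_zero] at this
      exact this.trans (mul_le_mul_of_nonneg_left htx ((abs_nonneg _).trans (hL x hx)))
    rintro t (ht | ht)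
    · exact hlip ⟨le_rfl, by linarith⟩ ⟨ht.1, by linarith [ht.2]⟩ ha
        (by rw [abs_of_nonneg (by linarith [ht.1])]; linarith [ht.2])
    · rw [add_sub_cancel_right] at ht
      exact hlip ⟨hab.le, by linarith⟩ ⟨by linarith [ht.1], ht.2⟩ hb
        (by rw [abs_of_nonneg (by linarith [ht.1])]; linarith [ht.2])
  rw [indexForm_eq_indexBilinForm hK (huφ.add (contDiff_const.mul hχ1))
      (huφc.add hχc.mul_left), indexBilinForm_add_smul hK huφ huφc hχ1 hχc,
    indexBilinForm_jacobi_mul_self hu hJ hφ hφc, indexBilinForm_eq_neg_integral hK huφ huφc hχ]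
  have hsq := integral_mul_deriv_plateau_sq_le hε hramp hD
  have hrem := abs_integral_jacobi_mul_plateau_add_le hK hu hJ hχ hab hε hb hχs hM
  have hηrem := mul_le_mul_of_nonneg_left hrem (abs_nonneg η)
  rw [← abs_mul] at hηrem
  linarith [neg_abs_le (η * ((∫ t, u t * plateau a (b + ε) ε t *
    (deriv (deriv χ) t + K t * χ t)) + deriv u b * χ b))]

theorem exists_indexForm_neg_of_zeros {K u : ℝ → ℝ} (hK : Continuous K) (hu : ContDiff ℝ 2 u)
    (hJ : ∀ t, deriv (deriv u) t + K t * u t = 0) {a b δ : ℝ} (hab : a < b) (hδ : 0 < δ)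
    (ha : u a = 0) (hb : u b = 0) (hb' : deriv u b ≠ 0) :
    ∃ f : ℝ → ℝ, ContDiff ℝ 1 f ∧ HasCompactSupport f ∧ tsupport f ⊆ Icc a (b + δ) ∧
      indexForm K f < 0 := by
  obtain ⟨χ, hχs, hχc, hχ, -, hχb⟩ := exists_contDiff_tsupport_subset (n := 2)
    (Icc_mem_nhds (show (a + b) / 2 < b by linarith) (show b < b + δ by linarith))
  obtain ⟨η, hη⟩ := exists_two_mul_mul_add_sq_mul_neg hb' (indexBilinForm K χ χ)
  obtain ⟨L, hL⟩ := (isCompact_Icc (a := a) (b := b + δ)).exists_bound_of_continuousOn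
    ((hu.deriv' (n := 1)).continuous.continuousOn)
  have := (hχ.deriv' (n := 1)).continuous_deriv le_rfl
  have := hχ.continuous
  have := hu.continuous
  obtain ⟨M, hM⟩ := (isCompact_Icc (a := a) (b := b + δ)).exists_bound_of_continuousOn
    (f := fun t => u t * (deriv (deriv χ) t + K t * χ t)) (by fun_prop)
  obtain ⟨D, hD⟩ := exists_abs_deriv_plateau_le
  set c := 2 * η * deriv u b + η ^ 2 * indexBilinForm K χ χ
  set A := 2 * (L * D) ^ 2 + 2 * |η| * M
  have hlim : Tendsto (fun ε => c + A * ε) (𝓝 0) (𝓝 c) := by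
    simpa using (by fun_prop : Continuous fun ε : ℝ => c + A * ε).tendsto 0
  have hev : ∀ᶠ ε in 𝓝[>] (0 : ℝ), 0 < ε ∧ ε < (b - a) / 2 ∧ ε < δ ∧ c + A * ε < 0 := by
    filter_upwards [self_mem_nhdsWithin, nhdsWithin_le_nhds (Iio_mem_nhds
      (show (0 : ℝ) < (b - a) / 2 by linarith)), nhdsWithin_le_nhds (Iio_mem_nhds hδ),
      nhdsWithin_le_nhds (hlim (Iio_mem_nhds hη))] with ε h0 h1 h2 h3
    exact ⟨h0, h1, h2, h3⟩
  obtain ⟨ε, hε, hεa, hεδ, hneg⟩ := hev.exists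
  set f := fun t => u t * plateau a (b + ε) ε t + η * χ t
  have hzero : ∀ t ∉ Icc a (b + δ), f t = 0 := by
    intro t ht
    have hχt : χ t = 0 := image_eq_zero_of_notMem_tsupport fun h =>
      ht (Icc_subset_Icc (by linarith) le_rfl (hχs h))
    rcases not_and_or.mp ht with ht | ht
    · simp [f, plateau_eq_zero_of_le hε.le (not_le.mp ht).le, hχt]
    · simp [f, plateau_eq_zero_of_ge hε.le (by linarith [not_le.mp ht] : b + ε ≤ t), hχt]
  have hsupp : tsupport f ⊆ Icc a (b + δ) :=
    closure_minimal (fun t ht => by_contra fun h => ht (hzero t h)) isClosed_Icc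
  refine ⟨f, ((hu.of_le one_le_two).mul contDiff_plateau).add
    (contDiff_const.mul (hχ.of_le one_le_two)),
    isCompact_Icc.of_isClosed_subset (isClosed_tsupport _) hsupp, hsupp, ?_⟩
  refine (indexForm_jacobi_mul_plateau_add_le hK hu hJ hχ hχc hab hε ha hb
    (fun t ht => show a + ε ≤ t by linarith [(hχs ht).1])
    (fun t ht => hL t ⟨ht.1, by linarith [ht.2]⟩) (hD _ _ _ · hε)
    (fun t ht => hM t ⟨by linarith [ht.1], by linarith [ht.2]⟩)).trans_lt ?_
  rwa [hχb, mul_one]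

theorem exists_pos_forall_add_lt {ι : Type*} [Finite ι] {p : ι → Prop} {x y : ι → ℝ}
    (h : ∀ i, p i → x i < y i) : ∃ δ > 0, ∀ i, p i → x i + δ < y i := by
  have hev : ∀ᶠ δ in 𝓝[>] (0 : ℝ), 0 < δ ∧ ∀ i, p i → x i + δ < y i := by
    refine (eventually_mem_nhdsWithin (a := 0) (s := Ioi 0)).and (eventually_all.2 fun i => ?_)
    by_cases hi : p i
    · exact nhdsWithin_le_nhds ((eventually_lt_nhds (sub_pos.2 (h i hi))).mono
        fun δ hδ _ => by linarith)
    · exact Eventually.of_forall fun _ h => absurd h hi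
  obtain ⟨δ, hδ, h⟩ := hev.exists
  exact ⟨δ, hδ, h⟩

/-- A Jacobi field with at least 2N zeros produces N disjointly supported
variations on which the index form is negative; hence the Morse index is ≥ N. -/
theorem stmt11 (K u : ℝ → ℝ) (hK : Continuous K) (hu : ContDiff ℝ 2 u)
    (hJ : ∀ t, deriv (deriv u) t + K t * u t = 0) (hne : u ≠ 0)
    (N : ℕ) (z : Fin (2 * N) → ℝ) (hz : StrictMono z) (hzero : ∀ i, u (z i) = 0) :
    ∃ f : Fin N → ℝ → ℝ,
      (∀ i, ContDiff ℝ 1 (f i)) ∧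
      (∀ i, HasCompactSupport (f i)) ∧
      (∀ i j, i ≠ j → Disjoint (tsupport (f i)) (tsupport (f j))) ∧
      (∀ i, (∫ t, (deriv (f i) t) ^ 2) < ∫ t, K t * (f i t) ^ 2) := by
  have hb' (t : ℝ) (ht : u t = 0) : deriv u t ≠ 0 := fun h =>
    hne (eq_zero_of_jacobi_of_deriv_eq_zero hK hu hJ ht h)
  let a (i : Fin N) : ℝ := z ⟨2 * i, by omega⟩
  let b (i : Fin N) : ℝ := z ⟨2 * i + 1, by omega⟩
  obtain ⟨δ, hδ, hgap⟩ := exists_pos_forall_add_lt (p := fun ij : Fin N × Fin N => ij.1 < ij.2)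
    (x := fun ij => b ij.1) (y := fun ij => a ij.2)
    fun ij hij => hz (by rw [Fin.lt_def] at hij ⊢; simp only; omega)
  choose f hf hfc hfs hQ using fun i => exists_indexForm_neg_of_zeros hK hu hJ (a := a i)
    (b := b i) (hz (by rw [Fin.lt_def]; simp only; omega)) hδ (hzero _) (hzero _) (hb' _ (hzero _))
  have hdisj (i j : Fin N) (hij : i < j) : Disjoint (tsupport (f i)) (tsupport (f j)) :=
    disjoint_of_subset (hfs i) (hfs j) (disjoint_left.2 fun t hi hj => by
      linarith [hi.2, hj.1, hgap (i, j) hij])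
  refine ⟨f, hf, hfc, fun i j hij => ?_, fun i => sub_neg.mp (hQ i)⟩
  rcases lt_or_gt_of_ne hij with h | h
  exacts [hdisj i j h, (hdisj j i h).symm]
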